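/- arXiv:1807.01240 — 2 statements merged into one kernel-verified Lean document; each statement's English description precedes it below -/
import Mathlib

section
/- For any two cache algorithms P and Q over a sufficiently large block set, and any trace t ∈ B^l, there exists a trace t' ∈ B^l with P(t') = Q(t') = Q(t). -/
structure CacheAlg (B : Type) where
  S : Type
  init : S
  n : ℕ
  tr : S → Fin n → S
  evict : S → B → S × Fin n

variable {B : Type} [DecidableEq B]

abbrev CacheAlg.Config (P : CacheAlg B) := P.S × (Fin P.n → Option B)

noncomputable def CacheAlg.upd (P : CacheAlg B) (g : P.Config) (b : B) : P.Config :=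
  if h : ∃ j, g.2 j = some b then (P.tr g.1 h.choose, g.2)
  else ((P.evict g.1 b).1, Function.update g.2 (P.evict g.1 b).2 (some b))

noncomputable def CacheAlg.updTrace (P : CacheAlg B) (g : P.Config) : List B → P.Config
  | [] => g
  | b :: t => P.updTrace (P.upd g b) t

noncomputable def CacheAlg.missesFrom (P : CacheAlg B) (g : P.Config) : List B → ℕ
  | [] => 0
  | b :: t => (if ∃ j, g.2 j = some b then 0 else 1) + P.missesFrom (P.upd g b) t

def CacheAlg.initConfig (P : CacheAlg B) : P.Config := (P.init, fun _ => none)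

/-- Number of misses of `P` on trace `t` from the empty initial configuration. -/
noncomputable def CacheAlg.misses (P : CacheAlg B) (t : List B) : ℕ := P.missesFrom P.initConfig t

/-- The leak ratio `r_{P,Q}(l)`: supremum over sets `T` of traces of length `l`
of `|P(T)| / |Q(T)|`. -/
noncomputable def leakRatio (P Q : CacheAlg B) (l : ℕ) : ℝ :=
  sSup {r : ℝ | ∃ T : Finset (List B), T.Nonempty ∧ (∀ t ∈ T, t.length = l) ∧
    r = ((T.image P.misses).card : ℝ) / ((T.image Q.misses).card : ℝ)}

/-- Lifting of a bijection on blocks to cache contents, mapping `⊥` to `⊥`. -/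
def renameContent (π : B ≃ B) {n : ℕ} (c : Fin n → Option B) : Fin n → Option B :=
  fun j => (c j).map π

/-- Lifting of a bijection on blocks to cache configurations. -/
def CacheAlg.renameConfig (P : CacheAlg B) (π : B ≃ B) (g : P.Config) : P.Config :=
  (g.1, renameContent π g.2)

/-- The eviction function is independent of the accessed block. -/
def CacheAlg.EvictBlockIndep (P : CacheAlg B) : Prop :=
  ∀ (s : P.S) (b b' : B), P.evict s b = P.evict s b'

/-- Congruence of pairs of cache configurations via a simultaneous renaming. -/
def CacheCongruent (P Q : CacheAlg B) (x y : P.Config × Q.Config) : Prop :=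
  ∃ π : B ≃ B, P.renameConfig π x.1 = y.1 ∧ Q.renameConfig π x.2 = y.2

theorem exists_some_notMem_range_of_lt {α : Type} {m n : ℕ} (f : Fin m → Option α)
    (g : Fin n → Option α) (h : (m + n : Cardinal) < Cardinal.mk α) :
    ∃ a : α, (¬∃ j, f j = some a) ∧ ¬∃ j, g j = some a := by
  by_contra! hcover
  have hS : (some ⁻¹' (Set.range f ∪ Set.range g) : Set α) = Set.univ :=
    Set.eq_univ_of_forall fun a => by
      by_cases ha : ∃ j, f j = some a
      · exact Or.inl ha
      · exact Or.inr (hcover a (not_exists.mp ha))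
  refine h.not_ge ?_
  calc Cardinal.mk α = Cardinal.mk (some ⁻¹' (Set.range f ∪ Set.range g) : Set α) := by
        rw [hS, Cardinal.mk_univ]
    _ ≤ Cardinal.mk (Set.range f ∪ Set.range g : Set (Option α)) :=
        Cardinal.mk_preimage_of_injective _ _ (Option.some_injective α)
    _ ≤ Cardinal.mk (Set.range f) + Cardinal.mk (Set.range g) := Cardinal.mk_union_le _ _
    _ ≤ m + n := by
        gcongr <;> exact Cardinal.mk_range_le.trans (Cardinal.mk_fin _).le

namespace CacheAlg

variable (P : CacheAlg B)

theorem upd_hit (g : P.Config) (b : B) : ∃ j, (P.upd g b).2 j = some b := by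
  unfold upd
  split
  · assumption
  · exact ⟨(P.evict g.1 b).2, by simp⟩

theorem upd_snd_of_hit {g : P.Config} {b : B} (h : ∃ j, g.2 j = some b) :
    (P.upd g b).2 = g.2 := by
  rw [upd, dif_pos h]

theorem missesFrom_cons_of_hit {g : P.Config} {b : B} (h : ∃ j, g.2 j = some b) (t : List B) :
    P.missesFrom g (b :: t) = P.missesFrom (P.upd g b) t := by
  rw [missesFrom, if_pos h, zero_add]

theorem missesFrom_cons_of_miss {g : P.Config} {b : B} (h : ¬∃ j, g.2 j = some b)
    (t : List B) : P.missesFrom g (b :: t) = P.missesFrom (P.upd g b) t + 1 := by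
  rw [missesFrom, if_neg h, add_comm]

theorem missesFrom_replicate_of_hit {b : B} :
    ∀ (m : ℕ) {g : P.Config}, (∃ j, g.2 j = some b) → P.missesFrom g (List.replicate m b) = 0
  | 0, _, _ => rfl
  | m + 1, g, h => by
    rw [List.replicate_succ, P.missesFrom_cons_of_hit h]
    exact missesFrom_replicate_of_hit m (by rwa [P.upd_snd_of_hit h])

theorem missesFrom_le_length : ∀ (g : P.Config) (t : List B), P.missesFrom g t ≤ t.length
  | _, [] => le_rfl
  | g, b :: t => by
    have := missesFrom_le_length (P.upd g b) t
    rw [missesFrom, List.length_cons]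
    split <;> omega

theorem misses_pos_of_ne_nil {t : List B} (ht : t ≠ []) : 0 < P.misses t := by
  obtain ⟨b, t, rfl⟩ := List.exists_cons_of_ne_nil ht
  rw [misses, P.missesFrom_cons_of_miss (by simp [initConfig])]
  exact Nat.succ_pos _

end CacheAlg

/-- `k + 1` blocks that miss in both caches (one exists at every point by the cardinality bound),
the last of them then repeated `m` times. -/
theorem exists_trace_missesFrom_eq (P Q : CacheAlg B)
    (hB : (P.n + Q.n : Cardinal) < Cardinal.mk B) (k m : ℕ) (gP : P.Config) (gQ : Q.Config) :
    ∃ t' : List B, t'.length = k + 1 + m ∧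
      P.missesFrom gP t' = k + 1 ∧ Q.missesFrom gQ t' = k + 1 := by
  induction k generalizing gP gQ with
  | zero =>
    obtain ⟨b, hbP, hbQ⟩ := exists_some_notMem_range_of_lt gP.2 gQ.2 hB
    refine ⟨b :: List.replicate m b, by simp [add_comm], ?_, ?_⟩
    · rw [P.missesFrom_cons_of_miss hbP, P.missesFrom_replicate_of_hit m (P.upd_hit gP b)]
    · rw [Q.missesFrom_cons_of_miss hbQ, Q.missesFrom_replicate_of_hit m (Q.upd_hit gQ b)]
  | succ k ih =>
    obtain ⟨b, hbP, hbQ⟩ := exists_some_notMem_range_of_lt gP.2 gQ.2 hB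
    obtain ⟨t', hlen, hP, hQ⟩ := ih (P.upd gP b) (Q.upd gQ b)
    refine ⟨b :: t', by simp [hlen]; omega, ?_, ?_⟩
    · rw [P.missesFrom_cons_of_miss hbP, hP]
    · rw [Q.missesFrom_cons_of_miss hbQ, hQ]

theorem exists_trace_matching_misses (P Q : CacheAlg B)
    (hB : (P.n + Q.n : Cardinal) < Cardinal.mk B) (t : List B) :
    ∃ t' : List B, t'.length = t.length ∧
      P.misses t' = Q.misses t ∧ Q.misses t' = Q.misses t := by
  by_cases ht : t = []
  · subst ht
    exact ⟨[], rfl, rfl, rfl⟩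
  obtain ⟨k, hk⟩ := Nat.exists_eq_add_one_of_ne_zero (Q.misses_pos_of_ne_nil ht).ne'
  have hle : Q.misses t ≤ t.length := Q.missesFrom_le_length _ t
  obtain ⟨t', hlen, hP, hQ⟩ :=
    exists_trace_missesFrom_eq P Q hB k (t.length - (k + 1)) P.initConfig Q.initConfig
  exact ⟨t', by omega, hk ▸ hP, hk ▸ hQ⟩
end

section
/- Let P be a cache algorithm with block-independent eviction and let π be a bijection on blocks such that configurations satisfy u_{m+1} = π*(u_m) for a sequence of configurations u_m, and traces ω_{m+1} = π*(ω_m). If P(u_0, ω_0) = a, then P(u_m, ω_m) = a for all m ∈ ℕ, and hence P on the pumped trace τ_m = ω_0 ∘ ω_1 ∘ … ∘ ω_{m−1} starting from u_0 produces exactly m·a misses. -/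
variable {B : Type} [DecidableEq B]

/-- The pumped trace `τ_m = ω_0 ∘ ω_1 ∘ … ∘ ω_{m−1}`. -/
def pumped (ω : ℕ → List B) : ℕ → List B
  | 0 => []
  | m + 1 => pumped ω m ++ ω m

/- With block-independent eviction, the behaviour of `P` never looks at block
names, only at which lines hold the requested block, so renaming every block by `π` in both
the configuration and the trace leaves the miss count unchanged and renames the final
configuration. Hence `(u (m+1), ω (m+1))` is the `π`-renaming of `(u m, ω m)` and has the
same miss count `a`; since each `u (m+1)` is also the configuration reached after `ω m`, the
misses on `pumped ω m` add up to `m * a`. -/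

omit [DecidableEq B] in
theorem renameContent_eq_some_iff (π : B ≃ B) {n : ℕ} (c : Fin n → Option B) (j : Fin n)
    (b : B) : renameContent π c j = some (π b) ↔ c j = some b := by
  simp [renameContent, π.injective.eq_iff]

omit [DecidableEq B] in
theorem renameContent_update (π : B ≃ B) {n : ℕ} (c : Fin n → Option B) (i : Fin n) (b : B) :
    renameContent π (Function.update c i (some b)) =
      Function.update (renameContent π c) i (some (π b)) :=
  Function.comp_update (Option.map π) c i (some b)

namespace CacheAlg

variable (P : CacheAlg B)

theorem upd_renameConfig (hEvict : P.EvictBlockIndep) (π : B ≃ B) (g : P.Config) (b : B) :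
    P.upd (P.renameConfig π g) (π b) = P.renameConfig π (P.upd g b) := by
  simp only [upd, renameConfig, renameContent_eq_some_iff]
  split_ifs
  · -- after the rewrite both hit branches choose a line for the same predicate
    rfl
  · rw [hEvict g.1 (π b) b, renameContent_update]

theorem missesFrom_renameConfig (hEvict : P.EvictBlockIndep) (π : B ≃ B) (g : P.Config)
    (t : List B) : P.missesFrom (P.renameConfig π g) (t.map π) = P.missesFrom g t := by
  induction t generalizing g with
  | nil => rfl
  | cons b t ih =>
    rw [List.map_cons, missesFrom, missesFrom, upd_renameConfig P hEvict, ih]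
    simp only [renameConfig, renameContent_eq_some_iff]

theorem updTrace_append (g : P.Config) (t t' : List B) :
    P.updTrace g (t ++ t') = P.updTrace (P.updTrace g t) t' := by
  induction t generalizing g with
  | nil => rfl
  | cons b t ih => exact ih (P.upd g b)

theorem missesFrom_append (g : P.Config) (t t' : List B) :
    P.missesFrom g (t ++ t') = P.missesFrom g t + P.missesFrom (P.updTrace g t) t' := by
  induction t generalizing g with
  | nil => simp [missesFrom, updTrace]
  | cons b t ih => simp only [List.cons_append, missesFrom, updTrace, ih, Nat.add_assoc]

theorem updTrace_pumped {u : ℕ → P.Config} {ω : ℕ → List B}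
    (hupd : ∀ m, u (m + 1) = P.updTrace (u m) (ω m)) (m : ℕ) :
    P.updTrace (u 0) (pumped ω m) = u m := by
  induction m with
  | zero => rfl
  | succ m ih => rw [pumped, updTrace_append, ih, hupd]

theorem missesFrom_pumped {u : ℕ → P.Config} {ω : ℕ → List B}
    (hupd : ∀ m, u (m + 1) = P.updTrace (u m) (ω m)) (m : ℕ) :
    P.missesFrom (u 0) (pumped ω m) = ∑ i ∈ Finset.range m, P.missesFrom (u i) (ω i) := by
  induction m with
  | zero => rfl
  | succ m ih => rw [pumped, missesFrom_append, ih, updTrace_pumped P hupd, Finset.sum_range_succ]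

end CacheAlg

theorem pumping_misses (P : CacheAlg B) (hEvict : P.EvictBlockIndep)
    (π : B ≃ B) (u : ℕ → P.Config) (ω : ℕ → List B) (a : ℕ)
    (hω : ∀ m, ω (m + 1) = (ω m).map π)
    (hu : ∀ m, u (m + 1) = P.renameConfig π (u m))
    (hupd : ∀ m, u (m + 1) = P.updTrace (u m) (ω m))
    (ha : P.missesFrom (u 0) (ω 0) = a) :
    (∀ m, P.missesFrom (u m) (ω m) = a) ∧
    (∀ m, P.missesFrom (u 0) (pumped ω m) = m * a) := by
  have hconst : ∀ m, P.missesFrom (u m) (ω m) = a := by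
    intro m
    induction m with
    | zero => exact ha
    | succ m ih => rw [hu, hω, P.missesFrom_renameConfig hEvict, ih]
  refine ⟨hconst, fun m => ?_⟩
  rw [P.missesFrom_pumped hupd, Finset.sum_congr rfl fun i _ => hconst i, Finset.sum_const,
    Finset.card_range, smul_eq_mul]
end
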